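/- (Polynomially decaying subsolution) Let f : [0,T]×ℝ³ → [0,∞) be a smooth solution of the Landau–Coulomb equation with λ⟨v⟩^{−3} Id ≤ A[f](t,v) ≤ Λ Id for all (t,v), for some 0 < λ ≤ Λ. Then for each k > 5 and a > 0 there exists η = η(λ,Λ,k) > 0 such that the function ψ(t,v) = a e^{−ηt} ⟨v⟩^{−k} satisfies the pointwise inequality ∂_t ψ ≤ A[f] : ∇²_v ψ + f ψ on (0,T)×ℝ³ (here A : B = Σ_{ij} A_{ij} B_{ij} denotes the Frobenius inner product of matrices). -/

import Mathlib

open MeasureTheory Real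
noncomputable section

/-- Velocity space `ℝ³`. -/
abbrev V3 : Type := EuclideanSpace ℝ (Fin 3)

/-- Japanese bracket `⟨v⟩ = (1 + |v|²)^{1/2}`. -/
def jap (v : V3) : ℝ := Real.sqrt (1 + ‖v‖ ^ 2)

/-- Positive part `x₊ = max(x,0)`. -/
def plus (x : ℝ) : ℝ := max x 0

/-- Partial derivative in the `i`-th coordinate direction. -/
def pd (i : Fin 3) (F : V3 → ℝ) (v : V3) : ℝ :=
  fderiv ℝ F v (EuclideanSpace.single i 1)

/-- The Landau-Coulomb diffusion matrix `A[g]`. -/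
def Amat (g : V3 → ℝ) (v : V3) : Matrix (Fin 3) (Fin 3) ℝ := fun i j =>
  ∫ w : V3, g w * (((if i = j then (1 : ℝ) else 0) -
      (v - w) i * (v - w) j / ‖v - w‖ ^ 2) / (8 * π * ‖v - w‖))

/-- The Coulomb potential `a[g]`. -/
def apot (g : V3 → ℝ) (v : V3) : ℝ := ∫ w : V3, g w / (4 * π * ‖v - w‖)

/-- Right-hand side `∇·(A[g]∇g − ∇a[g] g)` of the Landau equation. -/
def landauRHS (g : V3 → ℝ) (v : V3) : ℝ :=
  ∑ i : Fin 3, pd i (fun u =>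
    (∑ j : Fin 3, Amat g u i j * pd j g u) - pd i (apot g) u * g u) v

/-- `f` solves the Landau equation pointwise at every time in `s`. -/
def SolvesLandauOn (s : Set ℝ) (f : ℝ → V3 → ℝ) : Prop :=
  ∀ t ∈ s, ∀ v : V3, HasDerivAt (fun τ => f τ v) (landauRHS (f t) v) t

/-- A smooth, rapidly decaying (Schwartz-class in `v`) nonnegative solution on the
time set `s`, solving the equation pointwise on the interior of `s`. -/
structure SmoothRapidSolutionOn (s : Set ℝ) (f : ℝ → V3 → ℝ) : Prop where
  nonneg : ∀ t ∈ s, ∀ v : V3, 0 ≤ f t v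
  smooth : ContDiffOn ℝ (⊤ : ℕ∞) (fun q : ℝ × V3 => f q.1 q.2) (s ×ˢ (Set.univ : Set V3))
  schwartz : ∀ t ∈ s, ∃ φ : SchwartzMap V3 ℝ, ∀ v, f t v = φ v
  solves : SolvesLandauOn (interior s) f

/-- Normalization: unit mass, zero mean velocity, temperature `3`. -/
def Normalized (g : V3 → ℝ) : Prop :=
  (∫ v : V3, g v) = 1 ∧ (∀ i : Fin 3, (∫ v : V3, v i * g v) = 0) ∧
    (∫ v : V3, ‖v‖ ^ 2 * g v) = 3

/-- `c • Id ≤ M` as quadratic forms. -/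
def matGE (c : ℝ) (M : Matrix (Fin 3) (Fin 3) ℝ) : Prop :=
  ∀ ξ : Fin 3 → ℝ, c * ∑ i, ξ i ^ 2 ≤ ∑ i, ∑ j, M i j * ξ i * ξ j

/-- `M ≤ c • Id` as quadratic forms. -/
def matLE (M : Matrix (Fin 3) (Fin 3) ℝ) (c : ℝ) : Prop :=
  ∀ ξ : Fin 3 → ℝ, (∑ i, ∑ j, M i j * ξ i * ξ j) ≤ c * ∑ i, ξ i ^ 2

/-- `‖A[g]‖_{L^∞}`: sup over `v` of the operator norm of `A[g](v)`. -/
def AinfNorm (g : V3 → ℝ) : ℝ :=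
  ⨆ v : V3, ‖Matrix.toEuclideanCLM (𝕜 := ℝ) (Amat g v)‖

/-- Fisher information (with the convention `x/0 = 0`). -/
def fisher (g : V3 → ℝ) : ℝ := ∫ v : V3, ‖gradient g v‖ ^ 2 / g v

/-!
Write `ψ = c ⟨v⟩^{-k} = c (1 + |v|²)^{-k/2}`. Its Hessian is
`-k c ⟨v⟩^{-k-2} Id + k (k + 2) c ⟨v⟩^{-k-4} v ⊗ v`. The rank-one part pairs nonnegatively with
`A[f] ≥ 0`, and `tr A[f] ≤ 3Λ` bounds the isotropic part, so
`A[f] : ∇²ψ ≥ -3kΛ c ⟨v⟩^{-k-2} ≥ -3kΛ ψ`. Since `f ψ ≥ 0`, the choice `η = 3kΛ` works.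
-/

section OneAddNormSqRpow

variable {E : Type*} [NormedAddCommGroup E] [InnerProductSpace ℝ E]

theorem hasFDerivAt_const_mul_one_add_norm_sq_rpow (c p : ℝ) (u : E) :
    HasFDerivAt (fun w : E => c * (1 + ‖w‖ ^ 2) ^ p)
      ((2 * p * c * (1 + ‖u‖ ^ 2) ^ (p - 1)) • innerSL ℝ u) u := by
  have h := (((hasStrictFDerivAt_norm_sq u).hasFDerivAt.const_add 1).rpow_const
    (p := p) (Or.inl (by positivity))).const_mul c
  refine h.congr_fderiv (ContinuousLinearMap.ext fun x => ?_)
  simp only [smul_apply, innerSL_apply_apply, smul_eq_mul]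
  ring

theorem fderiv_const_mul_one_add_norm_sq_rpow_apply (c p : ℝ) (u e : E) :
    fderiv ℝ (fun w : E => c * (1 + ‖w‖ ^ 2) ^ p) u e
      = 2 * p * c * (1 + ‖u‖ ^ 2) ^ (p - 1) * inner ℝ u e := by
  simp [(hasFDerivAt_const_mul_one_add_norm_sq_rpow c p u).fderiv]

theorem fderiv_fderiv_const_mul_one_add_norm_sq_rpow_apply (c p : ℝ) (v e h : E) :
    fderiv ℝ (fun u => fderiv ℝ (fun w : E => c * (1 + ‖w‖ ^ 2) ^ p) u e) v h
      = 2 * p * c * (1 + ‖v‖ ^ 2) ^ (p - 1) * inner ℝ h e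
        + 4 * p * (p - 1) * c * (1 + ‖v‖ ^ 2) ^ (p - 2) * (inner ℝ v h * inner ℝ v e) := by
  simp_rw [fderiv_const_mul_one_add_norm_sq_rpow_apply]
  have hd : HasFDerivAt (fun u : E => 2 * p * c * (1 + ‖u‖ ^ 2) ^ (p - 1) * inner ℝ u e) _ v :=
    (hasFDerivAt_const_mul_one_add_norm_sq_rpow (2 * p * c) (p - 1) v).fun_mul
      ((innerSL ℝ (E := E)).flip e).hasFDerivAt
  rw [hd.fderiv]
  simp only [add_apply, smul_apply, ContinuousLinearMap.flip_apply, innerSL_apply_apply,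
    smul_eq_mul, real_inner_comm e]
  rw [sub_sub, one_add_one_eq_two]
  ring

end OneAddNormSqRpow

theorem pd_pd_const_mul_one_add_norm_sq_rpow (c p : ℝ) (i j : Fin 3) (v : V3) :
    pd i (fun u => pd j (fun w => c * (1 + ‖w‖ ^ 2) ^ p) u) v
      = (if i = j then 2 * p * c * (1 + ‖v‖ ^ 2) ^ (p - 1) else 0)
        + 4 * p * (p - 1) * c * (1 + ‖v‖ ^ 2) ^ (p - 2) * (v i * v j) := by
  simp only [pd, fderiv_fderiv_const_mul_one_add_norm_sq_rpow_apply,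
    EuclideanSpace.inner_single_right, PiLp.single_apply, conj_trivial, one_mul]
  by_cases h : i = j
  · simp [h]
  · simp [h, Ne.symm h]

theorem deriv_mul_exp_mul_mul (a b d t : ℝ) :
    deriv (fun s => a * Real.exp (b * s) * d) t = b * (a * Real.exp (b * t) * d) := by
  rw [((((hasDerivAt_id' t).const_mul b).exp.const_mul a).mul_const d).deriv]
  ring

theorem jap_rpow_neg (k : ℝ) (v : V3) : jap v ^ (-k) = (1 + ‖v‖ ^ 2) ^ (-k / 2) := by
  rw [jap, Real.sqrt_eq_rpow, ← Real.rpow_mul (by positivity)]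
  ring_nf

theorem quadForm_nonneg_of_matGE {c : ℝ} {M : Matrix (Fin 3) (Fin 3) ℝ} (hc : 0 ≤ c)
    (hM : matGE c M) (ξ : Fin 3 → ℝ) : 0 ≤ ∑ i, ∑ j, M i j * ξ i * ξ j :=
  (mul_nonneg hc (Finset.sum_nonneg fun i _ => sq_nonneg (ξ i))).trans (hM ξ)

theorem trace_le_of_matLE {M : Matrix (Fin 3) (Fin 3) ℝ} {Λ : ℝ} (hM : matLE M Λ) :
    M.trace ≤ 3 * Λ := by
  have hdiag (l : Fin 3) : M l l ≤ Λ := by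
    simpa [Pi.single_apply, ite_mul] using hM (Pi.single l 1)
  simpa [Matrix.trace, Fin.sum_univ_three] using
    Finset.sum_le_sum fun l (_ : l ∈ Finset.univ) => hdiag l

theorem sum_mul_ite_add_mul_mul {n : Type*} [Fintype n] [DecidableEq n]
    (M : Matrix n n ℝ) (α β : ℝ) (x : n → ℝ) :
    ∑ i, ∑ j, M i j * ((if i = j then α else 0) + β * (x i * x j))
      = α * M.trace + β * ∑ i, ∑ j, M i j * x i * x j := by
  simp only [mul_add, Finset.sum_add_distrib, mul_ite, mul_zero, Finset.sum_ite_eq,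
    Finset.mem_univ, if_true, Matrix.trace, Matrix.diag, Finset.mul_sum]
  congr 1
  · exact Finset.sum_congr rfl fun i _ => mul_comm _ _
  · exact Finset.sum_congr rfl fun i _ => Finset.sum_congr rfl fun j _ => by ring

theorem three_mul_mul_le_sum_mul_ite_add_mul_mul {c Λ α β : ℝ} {M : Matrix (Fin 3) (Fin 3) ℝ}
    (hc : 0 ≤ c) (hGE : matGE c M) (hLE : matLE M Λ) (hα : α ≤ 0) (hβ : 0 ≤ β)
    (x : Fin 3 → ℝ) :
    3 * Λ * α ≤ ∑ i, ∑ j, M i j * ((if i = j then α else 0) + β * (x i * x j)) := by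
  rw [sum_mul_ite_add_mul_mul]
  nlinarith [trace_le_of_matLE hLE, quadForm_nonneg_of_matGE hc hGE x]

/-- `ψ(t,v) = a e^{-ηt} ⟨v⟩^{-k}` is a subsolution of the linearized equation
`∂_t ψ ≤ A[f] : ∇²ψ + f ψ`. -/
theorem poly_decaying_subsolution
    (lam Lam k : ℝ) (hlam : 0 < lam) (hLL : lam ≤ Lam) (hk : 5 < k) :
    ∃ η : ℝ, 0 < η ∧
      ∀ a : ℝ, 0 < a →
      ∀ (T : ℝ) (f : ℝ → V3 → ℝ),
        (∀ t ∈ Set.Icc (0 : ℝ) T, ∀ v : V3, 0 ≤ f t v) →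
        ContDiffOn ℝ (⊤ : ℕ∞) (fun q : ℝ × V3 => f q.1 q.2)
          (Set.Icc 0 T ×ˢ (Set.univ : Set V3)) →
        SolvesLandauOn (Set.Ioo 0 T) f →
        (∀ t ∈ Set.Icc (0 : ℝ) T, ∀ v : V3,
          matGE (lam * jap v ^ (-(3 : ℝ))) (Amat (f t) v)) →
        (∀ t ∈ Set.Icc (0 : ℝ) T, ∀ v : V3, matLE (Amat (f t) v) Lam) →
        ∀ t ∈ Set.Ioo (0 : ℝ) T, ∀ v : V3,
          deriv (fun s => a * Real.exp (-η * s) * jap v ^ (-k)) t ≤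
            (∑ i : Fin 3, ∑ j : Fin 3, Amat (f t) v i j *
              pd i (fun u => pd j (fun w => a * Real.exp (-η * t) * jap w ^ (-k)) u) v) +
            f t v * (a * Real.exp (-η * t) * jap v ^ (-k)) := by
  have hLam : 0 < Lam := hlam.trans_le hLL
  have hη : 0 < 3 * k * Lam := by positivity
  refine ⟨3 * k * Lam, hη, fun a ha T f hf0 _ _ hGE hLE t ht v => ?_⟩
  have htIcc : t ∈ Set.Icc 0 T := Set.Ioo_subset_Icc_self ht
  set η := 3 * k * Lam
  rw [deriv_mul_exp_mul_mul]
  set c := a * Real.exp (-η * t)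
  simp_rw [jap_rpow_neg, pd_pd_const_mul_one_add_norm_sq_rpow]
  set N := 1 + ‖v‖ ^ 2
  have hN : 1 ≤ N := le_add_of_nonneg_right (by positivity)
  have hα : 2 * (-k / 2) * c * N ^ (-k / 2 - 1) ≤ 0 := by
    have : 0 < c * N ^ (-k / 2 - 1) := by positivity
    nlinarith
  have hβ : 0 ≤ 4 * (-k / 2) * (-k / 2 - 1) * c * N ^ (-k / 2 - 2) := by
    have : 0 ≤ 4 * (-k / 2) * (-k / 2 - 1) := by nlinarith
    positivity
  have hA := three_mul_mul_le_sum_mul_ite_add_mul_mul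
    (mul_nonneg hlam.le (Real.rpow_nonneg (Real.sqrt_nonneg _) _)) (hGE t htIcc v) (hLE t htIcc v)
    hα hβ v
  have hpow : N ^ (-k / 2 - 1) ≤ N ^ (-k / 2) := Real.rpow_le_rpow_of_exponent_le hN (by linarith)
  have hfψ : 0 ≤ f t v * (c * N ^ (-k / 2)) := mul_nonneg (hf0 t htIcc v) (by positivity)
  linarith [mul_le_mul_of_nonneg_left hpow (mul_nonneg hη.le (by positivity) : 0 ≤ η * c)]
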